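/- arXiv:2403.14026 — 3 statements merged into one kernel-verified Lean document; each statement's English description precedes it below -/
import Mathlib

section
/- Let (Z, E) be a graph (E ⊆ Z × Z) and R ⊆ Z × Z. The following are equivalent: (i) for every y ∈ Z, (R^[0][{y}])^[10] ⊆ R^[0][{y}]; (ii) for every Y ⊆ Z, (R^[0][Y])^[10] ⊆ R^[0][Y]; (iii) for every B ⊆ Z, R^[1][B] = R^[1][B^[10]]. -/
/-- The operator `R^[0][Y] = {z | ∀ y ∈ Y, ¬ R z y}`. -/
def r0 {Z : Type*} (R : Z → Z → Prop) (Y : Set Z) : Set Z :=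
  {z | ∀ y ∈ Y, ¬ R z y}

/-- The operator `R^[1][B] = {z | ∀ b ∈ B, ¬ R b z}`. -/
def r1 {Z : Type*} (R : Z → Z → Prop) (B : Set Z) : Set Z :=
  {z | ∀ b ∈ B, ¬ R b z}

/-- `E`-compatibility of a relation `R`:
`(R^[0][{y}])^[10] ⊆ R^[0][{y}]` and `(R^[1][{b}])^[01] ⊆ R^[1][{b}]` for all `y, b`. -/
def ECompat {Z : Type*} (E R : Z → Z → Prop) : Prop :=
  (∀ y : Z, r0 E (r1 E (r0 R {y})) ⊆ r0 R {y}) ∧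
  (∀ b : Z, r1 E (r0 E (r1 R {b})) ⊆ r1 R {b})

/-- The `E`-mediated composition `R ◇_E T`:
`x (R ◇_E T) a` iff `x ∉ R^[0][E^[0][T^[0][{a}]]]`. -/
def compDia {Z : Type*} (E R T : Z → Z → Prop) : Z → Z → Prop :=
  fun x a => x ∉ r0 R (r0 E (r0 T {a}))

/-- The `E`-mediated composition `R □_E T`:
`a (R □_E T) x` iff `a ∉ R^[0][E^[1][T^[0][{x}]]]`. -/
def compBox {Z : Type*} (E R T : Z → Z → Prop) : Z → Z → Prop :=
  fun a x => a ∉ r0 R (r1 E (r0 T {x}))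

/-- The non-mediated composition `R ∗ T`: `a (R ∗ T) x` iff `a ∉ R^[0][T^[0][{x}]]`. -/
def compStar {Z : Type*} (R T : Z → Z → Prop) : Z → Z → Prop :=
  fun a x => a ∉ r0 R (r0 T {x})

lemma cl_mono {Z : Type*} (E : Z → Z → Prop) {X Y : Set Z} (h : X ⊆ Y) :
    r0 E (r1 E X) ⊆ r0 E (r1 E Y) := by
  intro x hx s hs
  exact hx s (fun b hb => hs b (h hb))

lemma cl_ext {Z : Type*} (E : Z → Z → Prop) (X : Set Z) : X ⊆ r0 E (r1 E X) := by
  intro x hx s hs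
  exact hs x hx

lemma r0_inter {Z : Type*} (R : Z → Z → Prop) (Y : Set Z) :
    r0 R Y = ⋂ y ∈ Y, r0 R {y} := by
  ext z
  simp [r0]

theorem ECompat_left_tfae {Z : Type*} (E R : Z → Z → Prop) :
    ((∀ y : Z, r0 E (r1 E (r0 R {y})) ⊆ r0 R {y}) ↔
      (∀ Y : Set Z, r0 E (r1 E (r0 R Y)) ⊆ r0 R Y)) ∧
    ((∀ Y : Set Z, r0 E (r1 E (r0 R Y)) ⊆ r0 R Y) ↔
      (∀ B : Set Z, r1 R B = r1 R (r0 E (r1 E B)))) := by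
  constructor
  · constructor
    · intro h Y x hx y hy
      have sub : r0 R Y ⊆ r0 R {y} := fun z hz y' hy' => by
        rw [Set.mem_singleton_iff] at hy'; rw [hy']; exact hz y hy
      exact h y (cl_mono E sub hx) y rfl
    · intro h y
      exact h {y}
  · constructor
    · intro h B
      apply Set.Subset.antisymm
      · intro z hz x hx
        have hBz : B ⊆ r0 R {z} := fun b hb y' hy' => by
          rw [Set.mem_singleton_iff] at hy'; rw [hy']; exact hz b hb
        have : x ∈ r0 R {z} := h {z} (cl_mono E hBz hx)
        exact this z rfl
      · intro z hz b hb
        exact hz b (cl_ext E B hb)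
    · intro h Y x hx y hy hRxy
      have hy' : y ∈ r1 R (r0 R Y) := fun b hb => hb y hy
      rw [h (r0 R Y)] at hy'
      exact hy' x hx hRxy
end

section
/- Let (Z, E) be a graph and R ⊆ Z × Z. The following are equivalent: (i) for every b ∈ Z, (R^[1][{b}])^[01] ⊆ R^[1][{b}]; (ii) for every B ⊆ Z, (R^[1][B])^[01] ⊆ R^[1][B]; (iii) for every Y ⊆ Z, R^[0][Y] = R^[0][Y^[01]]. -/
theorem ECompat_right_tfae {Z : Type*} (E R : Z → Z → Prop) :
    ((∀ b : Z, r1 E (r0 E (r1 R {b})) ⊆ r1 R {b}) ↔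
      (∀ B : Set Z, r1 E (r0 E (r1 R B)) ⊆ r1 R B)) ∧
    ((∀ B : Set Z, r1 E (r0 E (r1 R B)) ⊆ r1 R B) ↔
      (∀ Y : Set Z, r0 R Y = r0 R (r1 E (r0 E Y)))) := by
  have r0_anti : ∀ (S : Z → Z → Prop) {A B : Set Z}, A ⊆ B → r0 S B ⊆ r0 S A := by
    intro S A B h z hz y hy; exact hz y (h hy)
  have r1_anti : ∀ (S : Z → Z → Prop) {A B : Set Z}, A ⊆ B → r1 S B ⊆ r1 S A := by
    intro S A B h z hz y hy; exact hz y (h hy)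
  have ext01 : ∀ (Y : Set Z), Y ⊆ r1 E (r0 E Y) := by
    intro Y y hy b hb; exact hb y hy
  have h12 : (∀ b : Z, r1 E (r0 E (r1 R {b})) ⊆ r1 R {b}) →
      (∀ B : Set Z, r1 E (r0 E (r1 R B)) ⊆ r1 R B) := by
    intro h B z hz b hb
    have hsub : r1 R B ⊆ r1 R {b} := r1_anti R (by simpa using hb)
    exact h b (r1_anti E (r0_anti E hsub) hz) b rfl
  have h23 : (∀ B : Set Z, r1 E (r0 E (r1 R B)) ⊆ r1 R B) →
      (∀ Y : Set Z, r0 R Y = r0 R (r1 E (r0 E Y))) := by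
    intro h Y
    apply Set.Subset.antisymm
    · intro z hz y hy
      have hY : Y ⊆ r1 R {z} := by
        intro w hw b hb; rcases hb with rfl; exact hz w hw
      exact h {z} (r1_anti E (r0_anti E hY) hy) z rfl
    · exact r0_anti R (ext01 Y)
  have h32 : (∀ Y : Set Z, r0 R Y = r0 R (r1 E (r0 E Y))) →
      (∀ B : Set Z, r1 E (r0 E (r1 R B)) ⊆ r1 R B) := by
    intro h B z hz b hb
    have hbmem : b ∈ r0 R (r1 R B) := fun w hw => hw b hb
    rw [h (r1 R B)] at hbmem
    exact hbmem z hz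
  refine ⟨⟨h12, fun h b => h {b}⟩, ⟨h23, h32⟩⟩
end

section
/- The ∗-composition of relations on a graph is not associative in general: there exist a set Z with two elements, the graph (Z, Δ) with the identity relation, and Δ-compatible relations R = Z × Z, T = Δ, U = ∅ such that R ∗ (T ∗ U) ≠ (R ∗ T) ∗ U. Concretely, for any x ∈ Z, R^[0][(T ∗ U)^[0][{x}]] = Z while (R ∗ T)^[0][U^[0][{x}]] = ∅. -/
theorem compStar_not_assoc :
    ∃ (Z : Type) (E R T U : Z → Z → Prop),
      Nat.card Z = 2 ∧
      E = (fun a b => a = b) ∧ R = (fun _ _ => True) ∧ T = E ∧ U = (fun _ _ => False) ∧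
      (∀ x : Z, r0 R (r0 (compStar T U) {x}) = Set.univ) ∧
      (∀ x : Z, r0 (compStar R T) (r0 U {x}) = ∅) ∧
      compStar R (compStar T U) ≠ compStar (compStar R T) U := by
  set E : Bool → Bool → Prop := fun a b => a = b with hE
  set R : Bool → Bool → Prop := fun _ _ => True with hR
  set U : Bool → Bool → Prop := fun _ _ => False with hU
  have g1 : ∀ x : Bool, r0 R (r0 (compStar E U) {x}) = Set.univ := by
    intro x
    ext z
    simp only [Set.mem_univ, iff_true]
    intro y hy _
    refine hy x rfl ?_
    intro hmem
    exact hmem y (fun w _ => not_false) rfl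
  have g2 : ∀ x : Bool, r0 (compStar R E) (r0 U {x}) = ∅ := by
    intro x
    ext z
    simp only [Set.mem_empty_iff_false, iff_false]
    intro hz
    refine hz z (fun a _ => not_false) ?_
    intro hmem
    refine hmem (!z) ?_ trivial
    intro w hw
    have hw' : w = z := hw
    subst hw'
    exact Bool.not_ne_self w
  refine ⟨Bool, E, R, E, U, by rw [Nat.card_eq_fintype_card]; rfl, rfl, rfl, rfl, rfl, g1, g2, ?_⟩
  intro h
  have h2 : compStar (compStar R E) U true true := by
    intro hmem
    have : (true : Bool) ∈ (∅ : Set Bool) := g2 true ▸ hmem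
    exact this
  rw [← h] at h2
  have h1 : (true : Bool) ∈ r0 R (r0 (compStar E U) {true}) := by
    rw [g1 true]; trivial
  exact h2 h1
end
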